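/- Let K = Q(√2) with ring of integers O = Z[√2], fundamental unit u = 1+√2, and nontrivial automorphism σ. For every nonzero non-unit x ∈ O with |x| ≥ |σ(x)|, there exists a unit w ∈ O^× with |w| ≤ |x| and |σ(w)| < |σ(x)|. -/

import Mathlib

/-- The ring of integers `ℤ[√2]` of `ℚ(√2)`, realised inside `ℝ × ℝ` via the pair of
real embeddings: an element `x` is represented as `(x, σ(x))`. -/
noncomputable def Zsqrt2 : Subring (ℝ × ℝ) :=
  Subring.closure {(Real.sqrt 2, -Real.sqrt 2)}

private lemma sq2 : Real.sqrt 2 * Real.sqrt 2 = 2 := Real.mul_self_sqrt (by norm_num)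

lemma mem_Zsqrt2_iff (x : ℝ × ℝ) :
    x ∈ Zsqrt2 ↔ ∃ a b : ℤ, x = ((a : ℝ) + b * Real.sqrt 2, (a : ℝ) - b * Real.sqrt 2) := by
  constructor
  · intro h
    induction h using Subring.closure_induction with
    | mem y hy =>
        rw [Set.mem_singleton_iff] at hy
        exact ⟨0, 1, by simp [hy]⟩
    | zero => exact ⟨0, 0, by simp [Prod.ext_iff]⟩
    | one => exact ⟨1, 0, by simp [Prod.ext_iff]⟩
    | add y z hy hz ihy ihz =>
        obtain ⟨a, b, rfl⟩ := ihy
        obtain ⟨c, d, rfl⟩ := ihz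
        refine ⟨a + c, b + d, ?_⟩
        simp only [Prod.mk_add_mk, Prod.mk.injEq]
        push_cast
        constructor <;> ring
    | neg y hy ihy =>
        obtain ⟨a, b, rfl⟩ := ihy
        refine ⟨-a, -b, ?_⟩
        simp only [Prod.neg_mk, Prod.mk.injEq]
        push_cast
        constructor <;> ring
    | mul y z hy hz ihy ihz =>
        obtain ⟨a, b, rfl⟩ := ihy
        obtain ⟨c, d, rfl⟩ := ihz
        refine ⟨a * c + 2 * b * d, a * d + b * c, ?_⟩
        simp only [Prod.mk_mul_mk, Prod.mk.injEq]
        push_cast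
        constructor
        · linear_combination (b * d : ℝ) * sq2
        · linear_combination (b * d : ℝ) * sq2
  · rintro ⟨a, b, rfl⟩
    have h1 : ((Real.sqrt 2, -Real.sqrt 2) : ℝ × ℝ) ∈ Zsqrt2 :=
      Subring.subset_closure rfl
    have h2 : (b • (Real.sqrt 2, -Real.sqrt 2) : ℝ × ℝ) ∈ Zsqrt2 := zsmul_mem h1 b
    have h3 : ((a : ℤ) : ℝ × ℝ) ∈ Zsqrt2 := intCast_mem _ a
    have h4 := add_mem h3 h2
    convert h4 using 1
    rw [Prod.ext_iff]
    constructor <;>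
      simp [zsmul_eq_mul, Prod.ext_iff, sub_eq_add_neg, Prod.fst_intCast, Prod.snd_intCast]

/-- Elements of norm `±1` are units. -/
lemma isUnit_of_norm_pm_one (y : Zsqrt2) (a b : ℤ)
    (hy : (y : ℝ × ℝ) = ((a : ℝ) + b * Real.sqrt 2, (a : ℝ) - b * Real.sqrt 2))
    (h : a ^ 2 - 2 * b ^ 2 = 1 ∨ a ^ 2 - 2 * b ^ 2 = -1) : IsUnit y := by
  set ε : ℤ := a ^ 2 - 2 * b ^ 2 with hε
  have hmem : (((ε * a : ℤ) : ℝ) + (-(ε * b) : ℤ) * Real.sqrt 2,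
      ((ε * a : ℤ) : ℝ) - (-(ε * b) : ℤ) * Real.sqrt 2) ∈ Zsqrt2 :=
    (mem_Zsqrt2_iff _).mpr ⟨ε * a, -(ε * b), rfl⟩
  refine IsUnit.of_mul_eq_one (a := y) ⟨_, hmem⟩ ?_
  have hε2 : (ε : ℝ) * ε = 1 := by
    rcases h with h | h <;> rw [← hε] at * <;> rw [h] <;> norm_num
  have hεdef : (ε : ℝ) = (a : ℝ) ^ 2 - 2 * b ^ 2 := by rw [hε]; push_cast; ring
  apply Subtype.ext
  rw [Subring.coe_mul, hy, Subring.coe_one]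
  rw [Prod.ext_iff]
  constructor
  · show ((a : ℝ) + b * Real.sqrt 2) * _ = 1
    push_cast
    linear_combination (-(ε : ℝ) * b ^ 2) * sq2 - (ε : ℝ) * hεdef + hε2
  · show ((a : ℝ) - b * Real.sqrt 2) * _ = 1
    push_cast
    linear_combination (-(ε : ℝ) * b ^ 2) * sq2 - (ε : ℝ) * hεdef + hε2

/-- For every nonzero non-unit `x ∈ ℤ[√2]` with `|x| ≥ |σ(x)|` there is a unit `u`
with `|u| ≤ |x|` and `|σ(u)| < |σ(x)|`. -/
theorem sqrt2_unit_step (x : Zsqrt2) (hx : x ≠ 0) (hxu : ¬ IsUnit x)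
    (hord : |(x : ℝ × ℝ).2| ≤ |(x : ℝ × ℝ).1|) :
    ∃ u : Zsqrt2, IsUnit u ∧ |(u : ℝ × ℝ).1| ≤ |(x : ℝ × ℝ).1| ∧
      |(u : ℝ × ℝ).2| < |(x : ℝ × ℝ).2| := by
  obtain ⟨a, b, hab⟩ := (mem_Zsqrt2_iff _).mp x.2
  set r := Real.sqrt 2 with hr
  have hr0 : 0 < r := Real.sqrt_pos.mpr (by norm_num)
  have hr1 : 1 < r := by nlinarith [sq2]
  have hrlt : r < 2 := by nlinarith [sq2]
  set N : ℤ := a ^ 2 - 2 * b ^ 2 with hN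
  have hNR : (N : ℝ) = (a : ℝ) ^ 2 - 2 * (b : ℝ) ^ 2 := by rw [hN]; push_cast; ring
  have hprod : (x : ℝ × ℝ).1 * (x : ℝ × ℝ).2 = (N : ℝ) := by
    rw [hab]; push_cast
    linear_combination (-(b : ℝ) ^ 2) * sq2 - hNR
  -- N ≠ 0
  have hN0 : N ≠ 0 := by
    intro h0
    rcases eq_or_ne b 0 with hb | hb
    · have ha : a = 0 := by
        have := hN ▸ h0; nlinarith [this, sq_nonneg a]
      apply hx
      apply Subtype.ext
      rw [hab, ha, hb]
      norm_num
    · have h2 : (a : ℝ) ^ 2 = 2 * (b : ℝ) ^ 2 := by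
        have : a ^ 2 = 2 * b ^ 2 := by omega
        exact_mod_cast congrArg (fun z : ℤ => (z : ℝ)) this
      have hbR : (b : ℝ) ≠ 0 := Int.cast_ne_zero.mpr hb
      have hq : ((|a| / |b| : ℚ) : ℝ) = |(a : ℝ)| / |(b : ℝ)| := by push_cast; simp
      have hsq : (|(a : ℝ)| / |(b : ℝ)|) ^ 2 = 2 := by
        rw [div_pow, sq_abs, sq_abs, h2]
        field_simp
      have : Real.sqrt 2 = |(a : ℝ)| / |(b : ℝ)| := by
        rw [← hsq, Real.sqrt_sq (by positivity)]
      exact irrational_sqrt_two ⟨|a| / |b|, by rw [hq, ← this]⟩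
  have hNu : N ≠ 1 ∧ N ≠ -1 := by
    constructor <;> intro h <;> exact hxu (isUnit_of_norm_pm_one x a b hab (by rw [← hN]; omega))
  have hN2 : 2 ≤ |N| := by rcases abs_cases N with ⟨h,_⟩ | ⟨h,_⟩ <;> omega
  have hx2 : (x : ℝ × ℝ).2 ≠ 0 := by
    intro h; rw [h, mul_zero] at hprod; exact hN0 (by exact_mod_cast hprod.symm)
  have hx2pos : 0 < |(x : ℝ × ℝ).2| := abs_pos.mpr hx2
  have habs : |(x : ℝ × ℝ).1| * |(x : ℝ × ℝ).2| = |(N : ℝ)| := by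
    rw [← abs_mul, hprod]
  have hNabs : (2 : ℝ) ≤ |(N : ℝ)| := by exact_mod_cast (by exact_mod_cast hN2 : (2:ℤ) ≤ |N|)
  rcases eq_or_lt_of_le hN2 with hNeq | hNgt
  · -- |N| = 2 : x is √2 times a unit, take u = x / √2
    have haeven : Even a := by
      have : Even (a ^ 2) := by
        rcases abs_eq (by norm_num : (0:ℤ) ≤ 2) |>.mp hNeq.symm with h | h <;>
          · refine ⟨b ^ 2 + (N / 2) * 1, by omega⟩
      exact (Int.even_pow' (by norm_num)).mp this
    obtain ⟨a', ha'⟩ := haeven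
    have hwmem : (((b : ℤ) : ℝ) + (a' : ℤ) * r, ((b : ℤ) : ℝ) - (a' : ℤ) * r) ∈ Zsqrt2 :=
      (mem_Zsqrt2_iff _).mpr ⟨b, a', rfl⟩
    set w : Zsqrt2 := ⟨_, hwmem⟩ with hw
    have hwunit : IsUnit w := by
      refine isUnit_of_norm_pm_one w b a' rfl ?_
      have hthis : a = 2 * a' := by omega
      have hsq : a ^ 2 = 4 * a' ^ 2 := by rw [hthis]; ring
      rcases abs_eq (by norm_num : (0:ℤ) ≤ 2) |>.mp hNeq.symm with h | h
      · right; linarith [hsq, hN, h]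
      · left; linarith [hsq, hN, h]
    have hx1w : (x : ℝ × ℝ).1 = r * (w : ℝ × ℝ).1 := by
      rw [hab, hw]
      show (a : ℝ) + b * r = r * ((b : ℝ) + a' * r)
      have : (a : ℝ) = 2 * a' := by exact_mod_cast (by omega : a = 2 * a')
      linear_combination this - (a' : ℝ) * sq2
    have hx2w : (x : ℝ × ℝ).2 = -r * (w : ℝ × ℝ).2 := by
      rw [hab, hw]
      show (a : ℝ) - b * r = -r * ((b : ℝ) - a' * r)
      have : (a : ℝ) = 2 * a' := by exact_mod_cast (by omega : a = 2 * a')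
      linear_combination this - (a' : ℝ) * sq2
    refine ⟨w, hwunit, ?_, ?_⟩
    · rw [hx1w, abs_mul, abs_of_pos hr0]
      nlinarith [abs_nonneg ((w : ℝ × ℝ).1)]
    · rw [hx2w, abs_mul, abs_neg, abs_of_pos hr0]
      have hw2 : 0 < |(w : ℝ × ℝ).2| := by
        rcases eq_or_lt_of_le (abs_nonneg ((w : ℝ × ℝ).2)) with h | h
        · exfalso; rw [hx2w, abs_mul, abs_neg, abs_of_pos hr0, ← h, mul_zero] at hx2pos
          exact lt_irrefl _ hx2pos
        · exact h
      nlinarith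
  · -- |N| ≥ 3
    have hN3 : (3 : ℝ) ≤ |(N : ℝ)| := by
      exact_mod_cast (by exact_mod_cast hNgt : (3:ℤ) ≤ |N|)
    set l : ℝ := 1 + r with hl
    have hl1 : 1 < l := by linarith
    have hx1big : 1 < |(x : ℝ × ℝ).1| := by nlinarith
    have hP : ∃ m : ℕ, |(x : ℝ × ℝ).1| < l ^ m := pow_unbounded_of_one_lt _ hl1
    classical
    set m := Nat.find hP with hm
    have hmlt : |(x : ℝ × ℝ).1| < l ^ m := Nat.find_spec hP
    have hmpos : m ≠ 0 := by
      intro h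
      rw [h, pow_zero] at hmlt
      linarith
    set n := m - 1 with hn
    have hmn : m = n + 1 := by omega
    have hnle : l ^ n ≤ |(x : ℝ × ℝ).1| := by
      by_contra h
      push_neg at h
      exact (Nat.find_min hP (by omega : n < m)) h
    -- the unit (1+√2, 1-√2)
    have hUmem : (((1 : ℤ) : ℝ) + (1 : ℤ) * r, ((1 : ℤ) : ℝ) - (1 : ℤ) * r) ∈ Zsqrt2 :=
      (mem_Zsqrt2_iff _).mpr ⟨1, 1, rfl⟩
    set U : Zsqrt2 := ⟨_, hUmem⟩ with hU
    have hUunit : IsUnit U := isUnit_of_norm_pm_one U 1 1 rfl (by norm_num)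
    refine ⟨U ^ n, hUunit.pow n, ?_, ?_⟩
    · have hcoe : ((U ^ n : Zsqrt2) : ℝ × ℝ) = ((U : ℝ × ℝ)) ^ n := by push_cast; ring
      rw [hcoe, Prod.pow_fst]
      show |(((1:ℤ):ℝ) + ((1:ℤ):ℝ) * r) ^ n| ≤ _
      have : (((1:ℤ):ℝ) + ((1:ℤ):ℝ) * r) = l := by push_cast; ring
      rw [this, abs_of_pos (pow_pos (by linarith) n)]
      exact hnle
    · have hcoe : ((U ^ n : Zsqrt2) : ℝ × ℝ) = ((U : ℝ × ℝ)) ^ n := by push_cast; ring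
      rw [hcoe, Prod.pow_snd]
      show |(((1:ℤ):ℝ) - ((1:ℤ):ℝ) * r) ^ n| < _
      have h1r : |((1:ℤ):ℝ) - ((1:ℤ):ℝ) * r| = r - 1 := by
        push_cast
        rw [abs_of_nonpos (by linarith)]
        ring
      rw [abs_pow, h1r]
      -- key : (r-1)^n * l^n = 1
      have hkey : (r - 1) ^ n * l ^ n = 1 := by
        rw [← mul_pow]
        have : (r - 1) * l = 1 := by rw [hl]; linear_combination sq2
        rw [this, one_pow]
      set A : ℝ := l ^ n with hA
      set B : ℝ := (r - 1) ^ n with hB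
      have hlpos : (0:ℝ) < l := by linarith
      have hrpos : (0:ℝ) < r - 1 := by linarith
      have hApos : 0 < A := pow_pos hlpos n
      have hBpos : 0 < B := pow_pos hrpos n
      have hmlt' : |(x : ℝ × ℝ).1| < A * l := by
        rw [hA, ← pow_succ, ← hmn]; exact hmlt
      have h3 : (3 : ℝ) ≤ |(x : ℝ × ℝ).1| * |(x : ℝ × ℝ).2| := by rw [habs]; exact hN3
      -- 3 ≤ |x1||x2| < A l |x2|  ⇒  3 B < l |x2|  ⇒  B < |x2| since l < 3
      have hstep : 3 < A * l * |(x : ℝ × ℝ).2| :=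
        lt_of_le_of_lt h3 (mul_lt_mul_of_pos_right hmlt' hx2pos)
      have h5 : 3 * B < A * l * |(x : ℝ × ℝ).2| * B := mul_lt_mul_of_pos_right hstep hBpos
      have h6 : A * l * |(x : ℝ × ℝ).2| * B = l * |(x : ℝ × ℝ).2| := by
        linear_combination l * |(x : ℝ × ℝ).2| * hkey
      have h7 : l * |(x : ℝ × ℝ).2| < 3 * |(x : ℝ × ℝ).2| :=
        mul_lt_mul_of_pos_right (by linarith) hx2pos
      linarith
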